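/- arXiv:math/0607823 — 2 statements merged into one kernel-verified Lean document; each statement's English description precedes it below -/
import Mathlib

section
/- The Chu–Vandermonde identity: for every nonnegative integer n and parameters b, c (with (c)_n ≠ 0), Σ_{i=0}^{n} (-n)_i (b)_i / (i! (c)_i) = (c - b)_n / (c)_n. -/
noncomputable def poch (x : ℝ) (n : ℕ) : ℝ := ∏ i ∈ Finset.range n, (x + i)

/-! Clearing the denominator `(c)_n` turns the `i`-th summand into `C(n,i) (-1)^i (b)_i (c+i)_{n-i}`.
Since `(-1)^i (b)_i` and `(c+i)_{n-i}` are the falling factorials `(-b)^{\underline i}` and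
`(c+n-1)^{\underline {n-i}}`, the sum is Vandermonde's convolution for falling factorials, which
gives `(c-b+n-1)^{\underline n} = (c-b)_n`. -/

open Finset Polynomial

theorem descPochhammer_smeval_int_eq_eval {R : Type*} [Ring R] (x : R) (n : ℕ) :
    (descPochhammer ℤ n).smeval x = (descPochhammer R n).eval x := by
  rw [descPochhammer_smeval_eq_ascPochhammer, ascPochhammer_smeval_eq_eval,
    descPochhammer_eval_eq_ascPochhammer]

theorem descPochhammer_eval_add {R : Type*} [CommRing R] (x y : R) (n : ℕ) :
    (descPochhammer R n).eval (x + y) = ∑ i ∈ range (n + 1),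
      (n.choose i : R) * (descPochhammer R i).eval x * (descPochhammer R (n - i)).eval y := by
  simp only [← descPochhammer_smeval_int_eq_eval, mul_assoc]
  rw [Ring.descPochhammer_smeval_add n (Commute.all x y),
    Nat.sum_antidiagonal_eq_sum_range_succ_mk]

theorem poch_eq_ascPochhammer_eval (x : ℝ) (n : ℕ) : poch x n = (ascPochhammer ℝ n).eval x := by
  induction n with
  | zero => simp [poch]
  | succ n ih => rw [poch, prod_range_succ, ← poch, ih, ascPochhammer_succ_eval]

theorem poch_eq_descPochhammer_eval (x : ℝ) (n : ℕ) :
    poch x n = (descPochhammer ℝ n).eval (x + n - 1) := by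
  rw [descPochhammer_eval_eq_ascPochhammer, poch_eq_ascPochhammer_eval]
  ring_nf

theorem poch_neg (x : ℝ) (n : ℕ) : poch (-x) n = (-1) ^ n * (descPochhammer ℝ n).eval x := by
  rw [poch_eq_ascPochhammer_eval, ascPochhammer_eval_neg_eq_descPochhammer]

theorem poch_add (x : ℝ) (m n : ℕ) : poch x (m + n) = poch x m * poch (x + m) n := by
  simp only [poch, prod_range_add, Nat.cast_add, add_assoc]

theorem sum_choose_mul_poch_mul_poch (n : ℕ) (b c : ℝ) :
    ∑ i ∈ range (n + 1), (-1) ^ i * (n.choose i : ℝ) * poch b i * poch (c + i) (n - i)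
      = poch (c - b) n := by
  rw [poch_eq_descPochhammer_eval, show c - b + n - 1 = -b + (c + n - 1) by ring,
    descPochhammer_eval_add]
  refine sum_congr rfl fun i hi => ?_
  have hin : i ≤ n := Nat.lt_succ_iff.mp (mem_range.mp hi)
  have hb : (-1) ^ i * poch b i = (descPochhammer ℝ i).eval (-b) := by
    rw [← neg_neg b, poch_neg, neg_neg, ← mul_assoc, ← mul_pow]
    simp
  rw [poch_eq_descPochhammer_eval (c + i), Nat.cast_sub hin, ← hb]
  ring_nf

theorem poch_neg_natCast (n i : ℕ) : poch (-(n : ℝ)) i = (-1) ^ i * n.descFactorial i := by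
  rw [poch_neg, descPochhammer_eval_eq_descFactorial]

theorem poch_neg_natCast_mul_poch_div {n i : ℕ} (hin : i ≤ n) (b : ℝ) {c : ℝ}
    (hc : poch c n ≠ 0) :
    poch (-(n : ℝ)) i * poch b i / ((i.factorial : ℝ) * poch c i)
      = (-1) ^ i * (n.choose i : ℝ) * poch b i * poch (c + i) (n - i) / poch c n := by
  have hsplit : poch c n = poch c i * poch (c + i) (n - i) := by
    rw [← poch_add, Nat.add_sub_cancel' hin]
  rw [hsplit] at hc ⊢
  rw [poch_neg_natCast, Nat.descFactorial_eq_factorial_mul_choose]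
  field_simp [Nat.factorial_ne_zero, left_ne_zero_of_mul hc, right_ne_zero_of_mul hc]
  push_cast
  ring

/-- The Chu–Vandermonde identity. -/
theorem stmt1 (n : ℕ) (b c : ℝ) (hc : ∀ i ≤ n, poch c i ≠ 0) :
    ∑ i ∈ Finset.range (n + 1),
      poch (-(n : ℝ)) i * poch b i / ((Nat.factorial i : ℝ) * poch c i)
    = poch (c - b) n / poch c n := by
  rw [sum_congr rfl fun i hi =>
      poch_neg_natCast_mul_poch_div (Nat.lt_succ_iff.mp (mem_range.mp hi)) b (hc n le_rfl),
    ← sum_div, sum_choose_mul_poch_mul_poch]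
end

section
/- For a nonnegative integer n and parameters a, b, c, d with a + b + 1 = c + d + n (the balanced case) and no denominator Pochhammer vanishing, the terminating balanced ₃F₂ sum satisfies the Pfaff–Saalschütz identity: Σ_{i=0}^{n} (-n)_i (a)_i (b)_i / (i! (c)_i (d)_i) = (c - a)_n (c - b)_n / ((c)_n (c - a - b)_n). -/
@[simp]
lemma poch_zero (x : ℝ) : poch x 0 = 1 := Finset.prod_range_zero _

lemma poch_succ (x : ℝ) (n : ℕ) : poch x (n + 1) = poch x n * (x + n) :=
  Finset.prod_range_succ _ _

lemma poch_succ' (x : ℝ) (n : ℕ) : poch x (n + 1) = x * poch (x + 1) n := by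
  rw [poch, Finset.prod_range_succ', mul_comm, poch]
  push_cast
  simp only [add_assoc, add_comm (1 : ℝ), add_zero]

lemma poch_ne_zero_iff {x : ℝ} {n : ℕ} : poch x n ≠ 0 ↔ ∀ i < n, x + i ≠ 0 := by
  simp [poch, Finset.prod_ne_zero_iff]

lemma poch_add_one {x : ℝ} (hx : x ≠ 0) (n : ℕ) :
    poch (x + 1) n = poch x n * ((x + n) / x) := by
  rw [mul_div_assoc', eq_div_iff hx, ← poch_succ, poch_succ', mul_comm]

noncomputable def saalschutzTerm (n : ℕ) (a b c d : ℝ) (k : ℕ) : ℝ :=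
  poch (-(n : ℝ)) k * poch a k * poch b k / ((Nat.factorial k : ℝ) * poch c k * poch d k)

lemma saalschutzTerm_succ (n : ℕ) (a b c d : ℝ) (k : ℕ) :
    saalschutzTerm n a b c d (k + 1) = saalschutzTerm n a b c d k *
      ((-n + k) * (a + k) * (b + k) / ((k + 1) * (c + k) * (d + k))) := by
  rw [saalschutzTerm, saalschutzTerm, div_mul_div_comm, poch_succ, poch_succ, poch_succ,
    poch_succ, poch_succ, Nat.factorial_succ]
  push_cast
  ring

lemma saalschutzTerm_shift (n : ℕ) (a b c : ℝ) {d : ℝ} (hd : d ≠ 0) (k : ℕ) :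
    saalschutzTerm n a b c (d + 1) k = saalschutzTerm (n + 1) a b c d k *
      ((-(n + 1) + k) / -(n + 1) * (d / (d + k))) := by
  have hn : -((n : ℝ) + 1) ≠ 0 := neg_ne_zero.2 (by positivity)
  rw [saalschutzTerm, saalschutzTerm, poch_add_one hd,
    show -(n : ℝ) = -((n + 1 : ℕ) : ℝ) + 1 by push_cast; ring, poch_add_one (by exact_mod_cast hn)]
  push_cast
  field_simp

lemma saalschutz_certificate {N k a b c d : ℝ} (hbal : a + b = c + d + N) (hN : N + 1 ≠ 0)
    (hcN : c + N ≠ 0) (hck : c + k ≠ 0) (hd : d ≠ 0) (hdk : d + k ≠ 0) (hk : k + 1 ≠ 0) :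
    (c - a + N) * (c - b + N) / ((c + N) * (c - a - b + N)) *
        ((-(N + 1) + k) / -(N + 1) * (d / (d + k)))
      + -((k + 1) * (c + (k + 1) - 1)) / ((N + 1) * (c + N)) *
          ((-(N + 1) + k) * (a + k) * (b + k) / ((k + 1) * (c + k) * (d + k)))
      - -(k * (c + k - 1)) / ((N + 1) * (c + N)) = 1 := by
  obtain rfl : b = c + d + N - a := by linarith
  rw [show c - a - (c + d + N - a) + N = -d by ring]
  field_simp
  ring

noncomputable def saalschutzCert (N : ℕ) (a b c d : ℝ) (k : ℕ) : ℝ :=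
  -(k * (c + k - 1)) / ((N + 1) * (c + N)) * saalschutzTerm (N + 1) a b c d k

lemma saalschutzTerm_eq_telescoping {N k : ℕ} {a b c d : ℝ} (hbal : a + b = c + d + N)
    (hcN : c + N ≠ 0) (hck : c + k ≠ 0) (hd : d ≠ 0) (hdk : d + k ≠ 0) :
    saalschutzTerm (N + 1) a b c d k =
      (c - a + N) * (c - b + N) / ((c + N) * (c - a - b + N)) * saalschutzTerm N a b c (d + 1) k
        + (saalschutzCert N a b c d (k + 1) - saalschutzCert N a b c d k) := by
  have key := saalschutz_certificate (k := k) hbal (by positivity) hcN hck hd hdk (by positivity)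
  rw [saalschutzCert, saalschutzCert, saalschutzTerm_succ, saalschutzTerm_shift _ _ _ _ hd]
  push_cast
  linear_combination (-saalschutzTerm (N + 1) a b c d k) * key

lemma saalschutz_sum_succ {N : ℕ} {a b c d : ℝ} (hbal : a + b = c + d + N)
    (hc : poch c (N + 1) ≠ 0) (hd : poch d (N + 1) ≠ 0) :
    ∑ k ∈ Finset.range (N + 2), saalschutzTerm (N + 1) a b c d k =
      (c - a + N) * (c - b + N) / ((c + N) * (c - a - b + N)) *
        ∑ k ∈ Finset.range (N + 1), saalschutzTerm N a b c (d + 1) k := by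
  rw [poch_ne_zero_iff] at hc hd
  have hcN : c + N ≠ 0 := hc N N.lt_succ_self
  have hd0 : d ≠ 0 := by simpa using hd 0 N.succ_pos
  have cert_zero : saalschutzCert N a b c d 0 = 0 := by simp [saalschutzCert]
  have cert_last :
      saalschutzCert N a b c d (N + 1) = -saalschutzTerm (N + 1) a b c d (N + 1) := by
    rw [saalschutzCert]
    push_cast
    rw [show c + (N + 1) - 1 = c + N by ring, neg_div, div_self (mul_ne_zero (by positivity) hcN)]
    ring
  rw [Finset.sum_range_succ,
    Finset.sum_congr rfl fun k hk => saalschutzTerm_eq_telescoping hbal hcN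
      (hc k (Finset.mem_range.1 hk)) hd0 (hd k (Finset.mem_range.1 hk)),
    Finset.sum_add_distrib, ← Finset.mul_sum, Finset.sum_range_sub, cert_zero, cert_last]
  ring

theorem saalschutz (n : ℕ) (a b c d : ℝ) (hbal : a + b + 1 = c + d + n)
    (hc : poch c n ≠ 0) (hd : poch d n ≠ 0) :
    ∑ k ∈ Finset.range (n + 1), saalschutzTerm n a b c d k =
      poch (c - a) n * poch (c - b) n / (poch c n * poch (c - a - b) n) := by
  induction n generalizing d with
  | zero => simp [saalschutzTerm]
  | succ N ih =>
    have hc' : poch c N ≠ 0 := left_ne_zero_of_mul (poch_succ c N ▸ hc)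
    have hd' : poch (d + 1) N ≠ 0 := right_ne_zero_of_mul (poch_succ' d N ▸ hd)
    push_cast at hbal
    rw [saalschutz_sum_succ (by linarith) hc hd, ih (d + 1) (by linarith) hc' hd',
      poch_succ (c - a), poch_succ (c - b), poch_succ c, poch_succ (c - a - b), div_mul_div_comm]
    congr 1 <;> ring

theorem stmt2_general (n : ℕ) (a b c d : ℝ)
    (hbal : a + b + 1 = c + d + n)
    (hc : ∀ i ≤ n, poch c i ≠ 0) (hd : ∀ i ≤ n, poch d i ≠ 0) :
    ∑ i ∈ Finset.range (n + 1),
      poch (-(n : ℝ)) i * poch a i * poch b i /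
        ((Nat.factorial i : ℝ) * poch c i * poch d i)
    = poch (c - a) n * poch (c - b) n / (poch c n * poch (c - a - b) n) :=
  saalschutz n a b c d hbal (hc n le_rfl) (hd n le_rfl)

/-- The Pfaff–Saalschütz identity for terminating balanced ₃F₂ series. -/
theorem stmt2 (n : ℕ) (a b c d : ℝ)
    (hbal : a + b + 1 = c + d + n)
    (hc : ∀ i ≤ n, poch c i ≠ 0) (hd : ∀ i ≤ n, poch d i ≠ 0)
    (hcab : poch (c - a - b) n ≠ 0) :
    ∑ i ∈ Finset.range (n + 1),
      poch (-(n : ℝ)) i * poch a i * poch b i /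
        ((Nat.factorial i : ℝ) * poch c i * poch d i)
    = poch (c - a) n * poch (c - b) n / (poch c n * poch (c - a - b) n) :=
  stmt2_general n a b c d hbal hc hd
end
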